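/- Let p be a prime and Q a finite p-group. Suppose there is a chain of subgroups 1 = Q₀ ≤ Q₁ ≤ ⋯ ≤ Q_ℓ = Q, with each Q_i normal in Q, such that each factor group Q_{i+1}/Q_i is elementary abelian of rank at most r (i.e., abelian, of exponent dividing p, and of order at most p^r). Then diam(Q) ≤ 4^(ℓ−1) · (p·r)^ℓ. -/

import Mathlib

/-!
For a normal subgroup `N` of `G` and a generating set `S` of `G`, every coset of `N`
contains an `S`-word of length at most `k = diam (G ⧸ N)`, and by Schreier's argument the
elements of `N` that are `S`-words of length at most `2k + 1` generate `N`. Writing each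
element as a short coset representative times an element of `N` gives
`diam G ≤ k + (2k + 1) diam N`. An elementary abelian group of order at most `p ^ r` has
diameter at most `p r` (quotient out one generator of order `p` at a time), so descending
the chain gives `diam Q ≤ f ℓ` with `f 0 = 0`, `f (n + 1) = p r + (2 p r + 1) f n`, and
`f ℓ ≤ 4 ^ (ℓ - 1) (p r) ^ ℓ`.
-/

/-- For a group `G`, `diamLe G L` says that for every generating set `S` of `G`, every
element of `G` is a product of at most `L` elements of `S ∪ S⁻¹`. -/
def diamLe (G : Type*) [Group G] (L : ℕ) : Prop :=
  ∀ S : Set G, Subgroup.closure S = ⊤ →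
    ∀ g : G, ∃ l : List G,
      (∀ x ∈ l, x ∈ S ∨ x⁻¹ ∈ S) ∧ l.length ≤ L ∧ l.prod = g

/-- The diameter `diam G` of a group `G`: the maximum over all generating sets `S` of the
least `L` such that every element of `G` is a product of at most `L` elements of
`S ∪ S⁻¹`, i.e. the least `L` such that `diamLe G L` holds. -/
noncomputable def diam (G : Type*) [Group G] : ℕ :=
  sInf {L | diamLe G L}

open Subgroup

section Words

variable {G H : Type*} [Group G] [Group H] {S : Set G} {L M : ℕ} {g : G}

def IsWord (S : Set G) (L : ℕ) (g : G) : Prop :=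
  ∃ l : List G, (∀ x ∈ l, x ∈ S ∨ x⁻¹ ∈ S) ∧ l.length ≤ L ∧ l.prod = g

theorem diamLe_iff : diamLe G L ↔ ∀ S : Set G, closure S = ⊤ → ∀ g, IsWord S L g :=
  Iff.rfl

theorem diamLe.isWord (h : diamLe G L) (hS : closure S = ⊤) (g : G) : IsWord S L g :=
  h S hS g

theorem diamLe.mono (h : diamLe G L) (hLM : L ≤ M) : diamLe G M := by
  intro S hS g
  obtain ⟨l, hl, hlen, hprod⟩ := h S hS g
  exact ⟨l, hl, hlen.trans hLM, hprod⟩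

theorem isWord_one (L : ℕ) : IsWord S L 1 :=
  ⟨[], by simp, by simp, rfl⟩

theorem isWord_of_mem (hg : g ∈ S) : IsWord S 1 g :=
  ⟨[g], by simp [hg], by simp, by simp⟩

theorem IsWord.mono (h : IsWord S L g) (hLM : L ≤ M) : IsWord S M g := by
  obtain ⟨l, hl, hlen, hprod⟩ := h
  exact ⟨l, hl, hlen.trans hLM, hprod⟩

theorem IsWord.mul {h : G} (hg : IsWord S L g) (hh : IsWord S M h) :
    IsWord S (L + M) (g * h) := by
  obtain ⟨l, hl, hlen, rfl⟩ := hg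
  obtain ⟨m, hm, hmlen, rfl⟩ := hh
  refine ⟨l ++ m, ?_, by simpa using Nat.add_le_add hlen hmlen, List.prod_append⟩
  simpa only [List.forall_mem_append] using ⟨hl, hm⟩

theorem IsWord.inv (h : IsWord S L g) : IsWord S L g⁻¹ := by
  obtain ⟨l, hl, hlen, rfl⟩ := h
  refine ⟨(l.map (·⁻¹)).reverse, ?_, by simpa using hlen, (List.prod_inv_reverse l).symm⟩
  intro x hx
  obtain ⟨y, hy, rfl⟩ := List.mem_map.mp (List.mem_reverse.mp hx)
  simpa [or_comm] using hl y hy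

theorem isWord_pow {t : G} (ht : t ∈ S) : ∀ n : ℕ, IsWord S n (t ^ n)
  | 0 => by simpa using isWord_one 0
  | n + 1 => by simpa [pow_succ] using (isWord_pow ht n).mul (isWord_of_mem ht)

theorem isWord_of_mem_zpowers {t : G} {p : ℕ} (ht : t ∈ S) (hp : 0 < p) (htp : t ^ p = 1)
    (hg : g ∈ zpowers t) : IsWord S (p - 1) g := by
  classical
  have ht_fin : IsOfFinOrder t := isOfFinOrder_iff_pow_eq_one.mpr ⟨p, hp, htp⟩
  obtain ⟨n, hn, rfl⟩ := Finset.mem_image.mp (ht_fin.mem_zpowers_iff_mem_range_orderOf.mp hg)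
  have : n < p := (Finset.mem_range.mp hn).trans_le (orderOf_le_of_pow_eq_one hp htp)
  exact (isWord_pow ht n).mono (by omega)

theorem isWord_list_prod :
    ∀ l : List G, (∀ x ∈ l, IsWord S M x) → IsWord S (M * l.length) l.prod
  | [] => fun _ => isWord_one _
  | x :: l => fun h => by
    rw [List.forall_mem_cons] at h
    simpa [Nat.mul_succ, add_comm] using h.1.mul (isWord_list_prod l h.2)

theorem IsWord.map_of_forall (f : H →* G) {T : Set H} {x : H} (h : IsWord T L x)
    (hT : ∀ t ∈ T, IsWord S M (f t)) : IsWord S (M * L) (f x) := by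
  obtain ⟨l, hl, hlen, rfl⟩ := h
  rw [map_list_prod]
  refine (isWord_list_prod _ ?_).mono (by simpa using Nat.mul_le_mul_left M hlen)
  simp only [List.mem_map]
  rintro _ ⟨t, htl, rfl⟩
  rcases hl t htl with ht | ht
  · exact hT t ht
  · simpa using (hT _ ht).inv

theorem IsWord.exists_of_map (f : G →* H) {y : H} (h : IsWord (f '' S) L y) :
    ∃ x, IsWord S L x ∧ f x = y := by
  obtain ⟨l, hl, hlen, rfl⟩ := h
  induction l generalizing L with
  | nil => exact ⟨1, isWord_one L, by simp⟩
  | cons y l ih =>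
    rw [List.forall_mem_cons] at hl
    rw [List.length_cons] at hlen
    obtain ⟨x, hx, hfx⟩ := ih hl.2 (Nat.le_sub_one_of_lt hlen)
    obtain ⟨s, hs, rfl⟩ : ∃ s, IsWord S 1 s ∧ f s = y := by
      rcases hl.1 with ⟨s, hs, rfl⟩ | ⟨s, hs, hsy⟩
      · exact ⟨s, isWord_of_mem hs, rfl⟩
      · exact ⟨s⁻¹, (isWord_of_mem hs).inv, by simp [hsy]⟩
    exact ⟨s * x, (hs.mul hx).mono (by omega), by simp [hfx]⟩

end Words

section Extension

variable {G : Type*} [Group G] {S : Set G} {k L : ℕ}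

theorem exists_isWord_inv_mul_mem (N : Subgroup G) [N.Normal] (hQ : diamLe (G ⧸ N) k)
    (hS : closure S = ⊤) (g : G) : ∃ w, IsWord S k w ∧ w⁻¹ * g ∈ N := by
  have hS' : closure (QuotientGroup.mk' N '' S) = ⊤ := by
    rw [← MonoidHom.map_closure, hS, map_top_of_surjective _ (QuotientGroup.mk'_surjective N)]
  obtain ⟨w, hw, hwg⟩ := (hQ.isWord hS' (g : G ⧸ N)).exists_of_map (QuotientGroup.mk' N)
  exact ⟨w, hw, QuotientGroup.eq.mp hwg⟩

theorem closure_setOf_isWord_eq_top (hS : closure S = ⊤) (N : Subgroup G)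
    (hrep : ∀ g, ∃ w, IsWord S k w ∧ w⁻¹ * g ∈ N) :
    closure {n : N | IsWord S (2 * k + 1) (n : G)} = ⊤ := by
  set K := closure (N.subtype '' {n : N | IsWord S (2 * k + 1) (n : G)})
  have mem_K {x : G} (hxN : x ∈ N) (hx : IsWord S (2 * k + 1) x) : x ∈ K :=
    subset_closure ⟨⟨x, hxN⟩, hx, rfl⟩
  -- Schreier: `w⁻¹ s w' ∈ K` when `w`, `w'` are short representatives of `s y` and `y`.
  have step (s y : G) (hs : IsWord S 1 s)
      (hy : ∀ w, IsWord S k w → w⁻¹ * y ∈ N → w⁻¹ * y ∈ K) :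
      ∀ w, IsWord S k w → w⁻¹ * (s * y) ∈ N → w⁻¹ * (s * y) ∈ K := by
    intro w hw hwN
    obtain ⟨w', hw', hw'N⟩ := hrep y
    have hN : w⁻¹ * s * w' ∈ N := by
      simpa [mul_assoc] using mul_mem hwN (inv_mem hw'N)
    have hword : IsWord S (2 * k + 1) (w⁻¹ * s * w') :=
      ((hw.inv.mul hs).mul hw').mono (by omega)
    simpa [mul_assoc] using mul_mem (mem_K hN hword) (hy w' hw' hw'N)
  have hK (g : G) : ∀ w, IsWord S k w → w⁻¹ * g ∈ N → w⁻¹ * g ∈ K := by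
    induction (hS ▸ mem_top g : g ∈ closure S) using closure_induction_left with
    | one =>
      intro w hw hwN
      rw [mul_one] at hwN ⊢
      exact mem_K hwN (hw.inv.mono (by omega))
    | mul_left s hs y _ ih => exact step s y (isWord_of_mem hs) ih
    | inv_mul_cancel s hs y _ ih => exact step s⁻¹ y (isWord_of_mem hs).inv ih
  rw [eq_top_iff]
  rintro n -
  obtain ⟨m, hm, hmn⟩ : (n : G) ∈ (Subgroup.closure _).map N.subtype := by
    rw [MonoidHom.map_closure]
    have := hK n 1 (isWord_one k) (by simp)
    rwa [inv_one, one_mul] at this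
  rwa [← N.subtype_injective hmn]

theorem diamLe_of_normal (N : Subgroup G) [N.Normal] (hQ : diamLe (G ⧸ N) k)
    (hN : diamLe N L) : diamLe G (k + (2 * k + 1) * L) := by
  rw [diamLe_iff]
  intro S hS g
  have hrep := exists_isWord_inv_mul_mem N hQ hS
  obtain ⟨w, hw, hwN⟩ := hrep g
  have hn : IsWord S ((2 * k + 1) * L) (w⁻¹ * g) :=
    (hN.isWord (closure_setOf_isWord_eq_top hS N hrep) ⟨_, hwN⟩).map_of_forall N.subtype
      fun n hn => hn
  simpa using hw.mul hn

end Extension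

section ElementaryAbelian

variable {p r : ℕ}

theorem card_quotient_zpowers_le {G : Type*} [Group G] (hp : p.Prime) {t : G} (ht : t ≠ 1)
    (htp : t ^ p = 1) (hcard : Nat.card G ≤ p ^ (r + 1)) :
    Nat.card (G ⧸ zpowers t) ≤ p ^ r := by
  have : Fact p.Prime := ⟨hp⟩
  have hcard' := (zpowers t).card_eq_card_quotient_mul_card_subgroup
  rw [Nat.card_zpowers, orderOf_eq_prime htp ht] at hcard'
  rw [pow_succ, hcard'] at hcard
  exact Nat.le_of_mul_le_mul_right hcard hp.pos

theorem diamLe_of_pow_eq_one {N : Type*} [CommGroup N] [Finite N] (hp : p.Prime)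
    (hexp : ∀ a : N, a ^ p = 1) (hcard : Nat.card N ≤ p ^ r) : diamLe N (p * r) := by
  induction r generalizing N with
  | zero =>
    have : Subsingleton N := Finite.card_le_one_iff_subsingleton.mp (by simpa using hcard)
    rw [diamLe_iff]
    intro S _ g
    simpa [Subsingleton.elim g 1] using isWord_one 0
  | succ r ih =>
    rw [diamLe_iff]
    intro S hS g
    by_cases hS1 : S ⊆ {1}
    · have hg : g ∈ (⊥ : Subgroup N) := closure_eq_bot_iff.mpr hS1 ▸ hS ▸ mem_top g
      simpa [mem_bot.mp hg] using isWord_one _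
    obtain ⟨t, htS, ht1⟩ := Set.not_subset.mp hS1
    have hexp' (a : N ⧸ zpowers t) : a ^ p = 1 :=
      QuotientGroup.induction_on a fun a => by
        rw [← QuotientGroup.mk_pow, hexp, QuotientGroup.mk_one]
    obtain ⟨w, hw, hwt⟩ := exists_isWord_inv_mul_mem _
      (ih hexp' (card_quotient_zpowers_le hp ht1 (hexp t) hcard)) hS g
    have hlen : p * r + (p - 1) ≤ p * (r + 1) := by
      rw [mul_add_one]
      omega
    simpa using (hw.mul (isWord_of_mem_zpowers htS hp.pos (hexp t) hwt)).mono hlen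

theorem diamLe_quotient_of_commutator_mem_of_pow_mem {G : Type*} [Group G] [Finite G]
    (hp : p.Prime) (N : Subgroup G) [N.Normal] (hcomm : ∀ a b : G, a * b * a⁻¹ * b⁻¹ ∈ N)
    (hexp : ∀ a : G, a ^ p ∈ N) (hindex : N.index ≤ p ^ r) : diamLe (G ⧸ N) (p * r) := by
  let : CommGroup (G ⧸ N) :=
    { mul_comm := fun a b => QuotientGroup.induction_on a fun a =>
        QuotientGroup.induction_on b fun b => by
          rw [← QuotientGroup.mk_mul, ← QuotientGroup.mk_mul, QuotientGroup.eq]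
          simpa [mul_assoc] using hcomm b⁻¹ a⁻¹ }
  refine diamLe_of_pow_eq_one hp (fun a => QuotientGroup.induction_on a fun a => ?_) hindex
  rw [← QuotientGroup.mk_pow, QuotientGroup.eq_one_iff]
  exact hexp a

end ElementaryAbelian

section Chain

variable {G : Type*} [Group G] {p r ℓ : ℕ} {C : ℕ → Subgroup G}

structure IsElemAbelianChain (p r ℓ : ℕ) (C : ℕ → Subgroup G) : Prop where
  bot : C 0 = ⊥
  mono : ∀ i < ℓ, C i ≤ C (i + 1)
  normal : ∀ i ≤ ℓ, (C i).Normal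
  commutator_mem : ∀ i < ℓ, ∀ a ∈ C (i + 1), ∀ b ∈ C (i + 1), a * b * a⁻¹ * b⁻¹ ∈ C i
  pow_mem : ∀ i < ℓ, ∀ a ∈ C (i + 1), a ^ p ∈ C i
  relIndex_le : ∀ i < ℓ, (C i).relIndex (C (i + 1)) ≤ p ^ r

theorem IsElemAbelianChain.le_of_le (h : IsElemAbelianChain p r ℓ C) {i j : ℕ} (hij : i ≤ j)
    (hj : j ≤ ℓ) : C i ≤ C j := by
  induction j, hij using Nat.le_induction with
  | base => exact le_rfl
  | succ j _ ih => exact (ih (by omega)).trans (h.mono j (by omega))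

theorem IsElemAbelianChain.subgroupOf (h : IsElemAbelianChain p r (ℓ + 1) C) :
    IsElemAbelianChain p r ℓ fun i => (C i).subgroupOf (C ℓ) where
  bot := by rw [h.bot, bot_subgroupOf]
  mono i hi := comap_mono (h.mono i (by omega))
  normal i hi := by
    have := h.normal i (by omega)
    infer_instance
  commutator_mem i hi a ha b hb := h.commutator_mem i (by omega) a ha b hb
  pow_mem i hi a ha := by
    simpa only [mem_subgroupOf, SubmonoidClass.coe_pow] using h.pow_mem i (by omega) a ha
  relIndex_le i hi := by
    rw [relIndex_subgroupOf (h.le_of_le (by omega) (by omega))]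
    exact h.relIndex_le i (by omega)

def chainDiamBound (k : ℕ) : ℕ → ℕ
  | 0 => 0
  | n + 1 => k + (2 * k + 1) * chainDiamBound k n

theorem chainDiamBound_le (k ℓ : ℕ) : chainDiamBound k ℓ ≤ 4 ^ (ℓ - 1) * k ^ ℓ := by
  suffices h : ∀ n, chainDiamBound k (n + 1) ≤ 4 ^ n * k ^ (n + 1) by
    cases ℓ with
    | zero => simp [chainDiamBound]
    | succ n => exact h n
  intro n
  induction n with
  | zero => simp [chainDiamBound]
  | succ n ih =>
    rcases Nat.eq_zero_or_pos k with rfl | hk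
    · simpa [chainDiamBound] using ih
    have hB : 1 ≤ 4 ^ n * k ^ (n + 1) := Nat.one_le_iff_ne_zero.mpr (by positivity)
    calc chainDiamBound k (n + 2) = k + (2 * k + 1) * chainDiamBound k (n + 1) := rfl
      _ ≤ k * (4 ^ n * k ^ (n + 1)) + 3 * k * (4 ^ n * k ^ (n + 1)) := by
        gcongr
        · exact Nat.le_mul_of_pos_right k hB
        · omega
      _ = 4 ^ (n + 1) * k ^ (n + 2) := by ring

theorem diamLe_of_isElemAbelianChain [Finite G] (hp : p.Prime)
    (hC : IsElemAbelianChain p r ℓ C) (htop : C ℓ = ⊤) : diamLe G (chainDiamBound (p * r) ℓ) := by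
  induction ℓ generalizing G with
  | zero =>
    intro S _ g
    exact ⟨[], by simp, by simp, (mem_bot.mp (hC.bot ▸ htop ▸ mem_top g)).symm⟩
  | succ ℓ ih =>
    have := hC.normal ℓ (by omega)
    have hcomm (a b : G) : a * b * a⁻¹ * b⁻¹ ∈ C ℓ :=
      hC.commutator_mem ℓ (by omega) a (htop ▸ mem_top a) b (htop ▸ mem_top b)
    have hexp (a : G) : a ^ p ∈ C ℓ := hC.pow_mem ℓ (by omega) a (htop ▸ mem_top a)
    have hindex : (C ℓ).index ≤ p ^ r := by
      simpa [htop] using hC.relIndex_le ℓ (by omega)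
    exact diamLe_of_normal (C ℓ)
      (diamLe_quotient_of_commutator_mem_of_pow_mem hp (C ℓ) hcomm hexp hindex)
      (ih hC.subgroupOf (subgroupOf_self _))

end Chain

theorem diam_p_group_of_chain_general
    (p : ℕ) (hp : p.Prime)
    (Q : Type*) [Group Q] [Finite Q]
    (ℓ r : ℕ) (C : ℕ → Subgroup Q)
    (h0 : C 0 = ⊥) (hℓ : C ℓ = ⊤)
    (hmono : ∀ i < ℓ, C i ≤ C (i + 1))
    (hnorm : ∀ i ≤ ℓ, (C i).Normal)
    (hcomm : ∀ i < ℓ, ∀ a ∈ C (i + 1), ∀ b ∈ C (i + 1), a * b * a⁻¹ * b⁻¹ ∈ C i)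
    (hexp : ∀ i < ℓ, ∀ a ∈ C (i + 1), a ^ p ∈ C i)
    (hord : ∀ i < ℓ, (C i).relIndex (C (i + 1)) ≤ p ^ r) :
    diam Q ≤ 4 ^ (ℓ - 1) * (p * r) ^ ℓ := by
  have hC : IsElemAbelianChain p r ℓ C := ⟨h0, hmono, hnorm, hcomm, hexp, hord⟩
  exact Nat.sInf_le ((diamLe_of_isElemAbelianChain hp hC hℓ).mono (chainDiamBound_le _ _))

/-- Let `p` be a prime and `Q` a finite `p`-group admitting a chain of
normal subgroups `⊥ = C 0 ≤ C 1 ≤ ⋯ ≤ C ℓ = ⊤` whose successive factors `C (i+1) / C i`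
are elementary abelian of rank at most `r` (i.e. abelian, of exponent dividing `p`, of
order at most `p ^ r`). Then `diam Q ≤ 4 ^ (ℓ - 1) * (p * r) ^ ℓ`. -/
theorem diam_p_group_of_chain
    (p : ℕ) (hp : p.Prime)
    (Q : Type*) [Group Q] [Finite Q] (hQ : IsPGroup p Q)
    (ℓ r : ℕ) (C : ℕ → Subgroup Q)
    (h0 : C 0 = ⊥) (hℓ : C ℓ = ⊤)
    (hmono : ∀ i < ℓ, C i ≤ C (i + 1))
    (hnorm : ∀ i ≤ ℓ, (C i).Normal)
    (hcomm : ∀ i < ℓ, ∀ a ∈ C (i + 1), ∀ b ∈ C (i + 1), a * b * a⁻¹ * b⁻¹ ∈ C i)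
    (hexp : ∀ i < ℓ, ∀ a ∈ C (i + 1), a ^ p ∈ C i)
    (hord : ∀ i < ℓ, (C i).relIndex (C (i + 1)) ≤ p ^ r) :
    diam Q ≤ 4 ^ (ℓ - 1) * (p * r) ^ ℓ :=
  diam_p_group_of_chain_general p hp Q ℓ r C h0 hℓ hmono hnorm hcomm hexp hord
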